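/- Let (T,d) be a compact ℝ-tree rooted at ρ, W the tree-indexed Gaussian process with Cov(W_σ, W_{σ'}) = d(ρ, σ∧σ'), and suppose σ_0 ∈ T has infinite branching degree: for every r > 0 there exist infinitely many points at distance r from σ_0 lying in pairwise distinct connected components of T \ {σ_0}. Then for every r > 0 and every n, choosing n such points σ_1, ..., σ_n, one has Var(W_{σ_0} | W_{σ_1}, ..., W_{σ_n}) ≤ r/n; in particular the conditional variance given all such points at distance r is 0, so W is not strongly locally nondeterministic. -/

import Mathlib

/-!
Averaging the increments: `W σ₀ - (1/n) ∑ W σᵢ = (1/n) ∑ (W σ₀ - W σᵢ)`. The covariance kernel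
gives `E[(W σ₀ - W σᵢ)(W σ₀ - W σⱼ)] = (d(σ₀,σᵢ) + d(σ₀,σⱼ) - d(σᵢ,σⱼ))/2`, which is `r` for
`i = j` and `0` for `i ≠ j` because `σ₀` lies between `σᵢ` and `σⱼ`. So the increments are
orthogonal with variance `r`, and their average has variance `r / n`.
-/

open MeasureTheory

/-- An `ℝ`-tree: a geodesic metric space satisfying the four-point (0-hyperbolicity)
condition. -/
def IsRTree (T : Type*) [MetricSpace T] : Prop :=
  (∀ x y : T, ∃ f : ℝ → T, f 0 = x ∧ f (dist x y) = y ∧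
    ∀ s ∈ Set.Icc (0 : ℝ) (dist x y), ∀ t ∈ Set.Icc (0 : ℝ) (dist x y),
      dist (f s) (f t) = |s - t|) ∧
  (∀ x y z w : T, dist x y + dist z w ≤ max (dist x z + dist y w) (dist x w + dist y z))

section SecondMoments

variable {Ω : Type*} [MeasurableSpace Ω] {P : Measure Ω}

lemma memLp_two_of_integral_mul_self_ne_zero {f : Ω → ℝ} (hf : AEStronglyMeasurable f P)
    (h : ∫ ω, f ω * f ω ∂P ≠ 0) : MemLp f 2 P := by
  rw [memLp_two_iff_integrable_sq hf]
  refine by_contra fun hni => h (integral_undef ?_)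
  simpa only [sq] using hni

lemma integral_sq_finset_sum_mul {ι : Type*} (s : Finset ι) (c : ι → ℝ) {X : ι → Ω → ℝ}
    (hX : ∀ i ∈ s, MemLp (X i) 2 P) :
    ∫ ω, (∑ i ∈ s, c i * X i ω) ^ 2 ∂P
      = ∑ i ∈ s, ∑ j ∈ s, c i * c j * ∫ ω, X i ω * X j ω ∂P := by
  have hint : ∀ i ∈ s, ∀ j ∈ s, Integrable (fun ω => c i * c j * (X i ω * X j ω)) P :=
    fun i hi j hj => ((hX i hi).integrable_mul (hX j hj)).const_mul _
  have hexpand : ∀ ω, (∑ i ∈ s, c i * X i ω) ^ 2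
      = ∑ i ∈ s, ∑ j ∈ s, c i * c j * (X i ω * X j ω) := fun ω => by
    rw [sq, Finset.sum_mul_sum]
    exact Finset.sum_congr rfl fun i _ => Finset.sum_congr rfl fun j _ => by ring
  simp_rw [hexpand, ← integral_const_mul]
  rw [integral_finsetSum _ fun i hi => integrable_finsetSum _ fun j hj => hint i hi j hj]
  exact Finset.sum_congr rfl fun i hi => integral_finsetSum _ fun j hj => hint i hi j hj

end SecondMoments

section GromovCovariance

variable {T Ω : Type*} [MeasurableSpace Ω] {P : Measure Ω} {ρ : T} {W : T → Ω → ℝ}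

/-- `E[W σ W σ']` is the Gromov product `(σ | σ')_ρ`, the covariance of Brownian motion on `T`
started at `ρ`. -/
def HasGromovCovariance [PseudoMetricSpace T] (P : Measure Ω) (ρ : T) (W : T → Ω → ℝ) : Prop :=
  ∀ σ σ', ∫ ω, W σ ω * W σ' ω ∂P = (dist ρ σ + dist ρ σ' - dist σ σ') / 2

namespace HasGromovCovariance

lemma memLp_two [MetricSpace T] (hW : HasGromovCovariance P ρ W) {σ : T}
    (hmeas : AEStronglyMeasurable (W σ) P) (hσ : σ ≠ ρ) : MemLp (W σ) 2 P := by
  refine memLp_two_of_integral_mul_self_ne_zero hmeas ?_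
  rw [hW, dist_self, sub_zero, add_self_div_two]
  exact dist_ne_zero.2 hσ.symm

lemma update_zero [PseudoMetricSpace T] [DecidableEq T] (hW : HasGromovCovariance P ρ W) :
    HasGromovCovariance P ρ (Function.update W ρ 0) := by
  intro σ σ'
  by_cases hσ : σ = ρ
  · subst hσ
    simp
  by_cases hσ' : σ' = ρ
  · subst hσ'
    simp [dist_comm]
  simpa [Function.update_of_ne hσ, Function.update_of_ne hσ'] using hW σ σ'

lemma memLp_two_update_zero [MetricSpace T] [DecidableEq T] (hW : HasGromovCovariance P ρ W)
    (hmeas : ∀ σ, AEStronglyMeasurable (W σ) P) (σ : T) :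
    MemLp (Function.update W ρ 0 σ) 2 P := by
  by_cases hσ : σ = ρ
  · subst hσ
    simp
  · rw [Function.update_of_ne hσ]
    exact hW.memLp_two (hmeas σ) hσ

lemma integral_mul_sub_sub [PseudoMetricSpace T] (hW : HasGromovCovariance P ρ W)
    (hL2 : ∀ σ, MemLp (W σ) 2 P) (x y z : T) :
    ∫ ω, (W z ω - W x ω) * (W z ω - W y ω) ∂P = (dist z x + dist z y - dist x y) / 2 := by
  have hint : ∀ a b, Integrable (fun ω => W a ω * W b ω) P :=
    fun a b => (hL2 a).integrable_mul (hL2 b)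
  simp_rw [sub_mul, mul_sub]
  rw [integral_sub (by exact (hint z z).sub (hint z y)) (by exact (hint x z).sub (hint x y)),
    integral_sub (hint z z) (hint z y), integral_sub (hint x z) (hint x y), hW, hW, hW, hW,
    dist_self, dist_comm x z]
  ring

lemma integral_sq_sub_average [PseudoMetricSpace T] (hW : HasGromovCovariance P ρ W)
    (hL2 : ∀ σ, MemLp (W σ) 2 P) {r : ℝ} {n : ℕ} (hn : n ≠ 0) (σ0 : T) (σs : Fin n → T)
    (hdist : ∀ i, dist σ0 (σs i) = r)
    (hsep : ∀ i j, i ≠ j → dist (σs i) (σs j) = dist (σs i) σ0 + dist σ0 (σs j)) :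
    ∫ ω, (W σ0 ω - ∑ i, (n : ℝ)⁻¹ * W (σs i) ω) ^ 2 ∂P = r / n := by
  have hincr : ∀ i j, ∫ ω, (W σ0 ω - W (σs i) ω) * (W σ0 ω - W (σs j) ω) ∂P
      = if i = j then r else 0 := by
    intro i j
    rw [hW.integral_mul_sub_sub hL2]
    split_ifs with h
    · subst h
      rw [hdist, dist_self]
      ring
    · rw [hsep i j h, dist_comm (σs i) σ0, hdist, hdist]
      ring
  have hsplit : ∀ ω, W σ0 ω - ∑ i, (n : ℝ)⁻¹ * W (σs i) ω
      = ∑ i, (n : ℝ)⁻¹ * (W σ0 ω - W (σs i) ω) := by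
    intro ω
    simp [mul_sub, Finset.sum_sub_distrib, hn]
  simp_rw [hsplit]
  rw [integral_sq_finset_sum_mul (X := fun i ω => W σ0 ω - W (σs i) ω) _ _
    fun i _ => (hL2 σ0).sub (hL2 (σs i))]
  simp only [hincr, mul_ite, mul_zero, Finset.sum_ite_eq, Finset.mem_univ, if_true,
    Finset.sum_const, Finset.card_univ, Fintype.card_fin, nsmul_eq_mul]
  field_simp

end HasGromovCovariance

end GromovCovariance

theorem stmt6_general {T : Type*} [MetricSpace T] (ρ : T)
    {Ω : Type*} [MeasurableSpace Ω] (P : Measure Ω)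
    (W : T → Ω → ℝ) (hmeas : ∀ σ, Measurable (W σ))
    (hcov : ∀ σ σ', ∫ ω, W σ ω * W σ' ω ∂P =
      (dist ρ σ + dist ρ σ' - dist σ σ') / 2)
    (r : ℝ) (hr : 0 < r) (n : ℕ) (hn : 1 ≤ n)
    (σ0 : T) (σs : Fin n → T)
    (hdist : ∀ i, dist σ0 (σs i) = r)
    (hsep : ∀ i j, i ≠ j →
      dist (σs i) (σs j) = dist (σs i) σ0 + dist σ0 (σs j)) :
    (⨅ a : Fin n → ℝ, ∫ ω, (W σ0 ω - ∑ i, a i * W (σs i) ω) ^ 2 ∂P) ≤ r / n := by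
  classical
  have hbdd : BddBelow (Set.range fun a : Fin n → ℝ =>
      ∫ ω, (W σ0 ω - ∑ i, a i * W (σs i) ω) ^ 2 ∂P) :=
    ⟨0, by rintro _ ⟨a, rfl⟩; exact integral_nonneg fun ω => sq_nonneg _⟩
  by_cases h0 : σ0 = ρ
  · calc _ ≤ ∫ ω, (W σ0 ω - ∑ i, (0 : Fin n → ℝ) i * W (σs i) ω) ^ 2 ∂P := ciInf_le hbdd 0
      _ = 0 := by simpa [sq, h0] using hcov ρ ρ
      _ ≤ r / n := by positivity
  have hW : HasGromovCovariance P ρ W := hcov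
  -- `W ρ` need not be square-integrable; `0` has the same covariances and is.
  calc _ ≤ ∫ ω, (W σ0 ω - ∑ i, (if σs i = ρ then 0 else (n : ℝ)⁻¹) * W (σs i) ω) ^ 2 ∂P :=
        ciInf_le hbdd _
    _ = ∫ ω, (Function.update W ρ 0 σ0 ω -
          ∑ i, (n : ℝ)⁻¹ * Function.update W ρ 0 (σs i) ω) ^ 2 ∂P := by
        rw [Function.update_of_ne h0]
        congr 1 with ω
        congr 2
        refine Finset.sum_congr rfl fun i _ => ?_
        by_cases hi : σs i = ρ <;> simp [hi]
    _ = r / n := hW.update_zero.integral_sq_sub_average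
        (hW.memLp_two_update_zero fun σ => (hmeas σ).aestronglyMeasurable) (by omega)
        σ0 σs hdist hsep

/-- Failure of strong local nondeterminism at an infinite-branching vertex: if
`σ_1, …, σ_n` lie at distance exactly `r` from `σ_0` in pairwise distinct components of
`T \ {σ_0}` (so that `d(σ_i, σ_j) = d(σ_i, σ_0) + d(σ_0, σ_j) = 2r` for `i ≠ j`), then
the conditional variance of `W_{σ_0}` given `W_{σ_1}, …, W_{σ_n}`, i.e. the infimum over
`a ∈ ℝ^n` of `Var(W_{σ_0} - Σ a_i W_{σ_i})`, is at most `r / n`. -/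
theorem stmt6 {T : Type*} [MetricSpace T] [CompactSpace T] (htree : IsRTree T) (ρ : T)
    {Ω : Type*} [MeasurableSpace Ω] (P : Measure Ω) [IsProbabilityMeasure P]
    (W : T → Ω → ℝ) (hmeas : ∀ σ, Measurable (W σ))
    (hmean : ∀ σ, ∫ ω, W σ ω ∂P = 0)
    (hcov : ∀ σ σ', ∫ ω, W σ ω * W σ' ω ∂P =
      (dist ρ σ + dist ρ σ' - dist σ σ') / 2)
    (r : ℝ) (hr : 0 < r) (n : ℕ) (hn : 1 ≤ n)
    (σ0 : T) (σs : Fin n → T)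
    (hdist : ∀ i, dist σ0 (σs i) = r)
    (hsep : ∀ i j, i ≠ j →
      dist (σs i) (σs j) = dist (σs i) σ0 + dist σ0 (σs j)) :
    (⨅ a : Fin n → ℝ, ∫ ω, (W σ0 ω - ∑ i, a i * W (σs i) ω) ^ 2 ∂P) ≤ r / n :=
  stmt6_general ρ P W hmeas hcov r hr n hn σ0 σs hdist hsep
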